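/- arXiv:2011.07476 — 7 statements merged into one kernel-verified Lean document; each statement's English description precedes it below -/
import Mathlib

section
/- Let μ, c ∈ (0,1) with [μ−c, μ+c] ⊆ [0,1]. A function f : {0,1} → ℝ satisfies E_{Y∼Bernoulli(μ̃)}[f(Y)] ≤ 0 for all μ̃ ∈ [μ−c, μ+c] if and only if there exists b ∈ ℝ such that f(y) ≤ b(y−μ) − |b|·c for all y ∈ {0,1}. -/
/-- A function `f : {0,1} → ℝ` has non-positive expectation under every
Bernoulli distribution with parameter in `[μ - c, μ + c]` iff it is dominated
by a fair bet `y ↦ b * (y - μ) - |b| * c` for some `b : ℝ`. -/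
theorem stmt_0 (μ c : ℝ) (hμ : μ ∈ Set.Ioo (0 : ℝ) 1) (hc : c ∈ Set.Ioo (0 : ℝ) 1)
    (hsub : Set.Icc (μ - c) (μ + c) ⊆ Set.Icc (0 : ℝ) 1) (f : ℝ → ℝ) :
    (∀ μ' ∈ Set.Icc (μ - c) (μ + c), μ' * f 1 + (1 - μ') * f 0 ≤ 0) ↔
      ∃ b : ℝ, ∀ y ∈ ({0, 1} : Set ℝ), f y ≤ b * (y - μ) - |b| * c := by
  obtain ⟨hc0, hc1⟩ := hc
  constructor
  · intro h
    refine ⟨f 1 - f 0, ?_⟩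
    rcases le_total (f 0) (f 1) with hle | hle
    · have habs : |f 1 - f 0| = f 1 - f 0 := abs_of_nonneg (by linarith)
      have := h (μ + c) ⟨by linarith, le_rfl⟩
      rintro y (rfl | rfl) <;> rw [habs] <;> nlinarith
    · have habs : |f 1 - f 0| = -(f 1 - f 0) := abs_of_nonpos (by linarith)
      have := h (μ - c) ⟨le_rfl, by linarith⟩
      rintro y (rfl | rfl) <;> rw [habs] <;> nlinarith
  · rintro ⟨b, hb⟩ μ' ⟨h1, h2⟩
    have h0 := hb 0 (Or.inl rfl)
    have h1' := hb 1 (Or.inr rfl)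
    obtain ⟨hμ'0, hμ'1⟩ := hsub ⟨h1, h2⟩
    have hbc : b * (μ' - μ) ≤ |b| * c := by
      calc b * (μ' - μ) ≤ |b * (μ' - μ)| := le_abs_self _
        _ = |b| * |μ' - μ| := abs_mul _ _
        _ ≤ |b| * c := by
            apply mul_le_mul_of_nonneg_left _ (abs_nonneg b)
            rw [abs_le]; constructor <;> linarith
    nlinarith
end

section
/- Let μ, c ∈ (0,1), μ* ∈ [0,1], and l : {0,1} → ℝ. Define the stake b = l(1) − l(0) and the loss-with-payment L^pay = E_{Y∼μ*}[l(Y)] − E_{Y∼μ*}[b(Y−μ) − |b|c] = E_{Y∼μ*}[l(Y) − b(Y−μ) + |b|c]. Then L^pay ∈ [L^min, L^max], where L^min and L^max are the minimum and maximum of E_{Y∼μ̃}[l(Y)] over μ̃ ∈ [μ−c, μ+c]. In fact L^pay = L^max. -/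
lemma stmt3_aux (μ c b l0 l1 : ℝ) (hc : 0 < c) (hb : b = l1 - l0) :
    IsGreatest ((fun m : ℝ => m * l1 + (1 - m) * l0) '' Set.Icc (μ - c) (μ + c))
      (l0 + μ * b + |b| * c) ∧
    IsLeast ((fun m : ℝ => m * l1 + (1 - m) * l0) '' Set.Icc (μ - c) (μ + c))
      (l0 + μ * b - |b| * c) := by
  have key : ∀ m : ℝ, m * l1 + (1 - m) * l0 = l0 + m * b := by
    intro m; rw [hb]; ring
  have hub : ∀ m ∈ Set.Icc (μ - c) (μ + c),
      (fun m : ℝ => m * l1 + (1 - m) * l0) m ≤ l0 + μ * b + |b| * c := by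
    intro m hm
    simp only []
    rw [key m]
    have h1 : (m - μ) * b ≤ |b| * c := by
      calc (m - μ) * b ≤ |(m - μ) * b| := le_abs_self _
      _ = |m - μ| * |b| := abs_mul _ _
      _ ≤ c * |b| := by
          apply mul_le_mul_of_nonneg_right _ (abs_nonneg b)
          rw [abs_le]; exact ⟨by linarith [hm.1], by linarith [hm.2]⟩
      _ = |b| * c := mul_comm _ _
    nlinarith
  have hlb : ∀ m ∈ Set.Icc (μ - c) (μ + c),
      l0 + μ * b - |b| * c ≤ (fun m : ℝ => m * l1 + (1 - m) * l0) m := by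
    intro m hm
    simp only []
    rw [key m]
    have h1 : -((m - μ) * b) ≤ |b| * c := by
      calc -((m - μ) * b) ≤ |(m - μ) * b| := neg_le_abs _
      _ = |m - μ| * |b| := abs_mul _ _
      _ ≤ c * |b| := by
          apply mul_le_mul_of_nonneg_right _ (abs_nonneg b)
          rw [abs_le]; exact ⟨by linarith [hm.1], by linarith [hm.2]⟩
      _ = |b| * c := mul_comm _ _
    nlinarith
  rcases le_or_gt 0 b with h | h
  · refine ⟨⟨⟨μ + c, ⟨by linarith, le_refl _⟩, ?_⟩, fun x ⟨m, hm, hx⟩ => hx ▸ hub m hm⟩,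
      ⟨⟨μ - c, ⟨le_refl _, by linarith⟩, ?_⟩, fun x ⟨m, hm, hx⟩ => hx ▸ hlb m hm⟩⟩
    · show (μ + c) * l1 + (1 - (μ + c)) * l0 = _
      rw [key, abs_of_nonneg h]; ring
    · show (μ - c) * l1 + (1 - (μ - c)) * l0 = _
      rw [key, abs_of_nonneg h]; ring
  · refine ⟨⟨⟨μ - c, ⟨le_refl _, by linarith⟩, ?_⟩, fun x ⟨m, hm, hx⟩ => hx ▸ hub m hm⟩,
      ⟨⟨μ + c, ⟨by linarith, le_refl _⟩, ?_⟩, fun x ⟨m, hm, hx⟩ => hx ▸ hlb m hm⟩⟩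
    · show (μ - c) * l1 + (1 - (μ - c)) * l0 = _
      rw [key, abs_of_neg h]; ring
    · show (μ + c) * l1 + (1 - (μ + c)) * l0 = _
      rw [key, abs_of_neg h]; ring

/-- With the stake `b = l 1 - l 0`, the agent's expected loss with side payment,
under any true probability `μ*`, lies in the forecasted expected-loss interval;
in fact it equals the maximum forecasted expected loss. -/
theorem stmt_3 (μ c μs : ℝ) (l : Fin 2 → ℝ)
    (hμ : μ ∈ Set.Ioo (0 : ℝ) 1) (hc : c ∈ Set.Ioo (0 : ℝ) 1)
    (hμs : μs ∈ Set.Icc (0 : ℝ) 1)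
    (b : ℝ) (hb : b = l 1 - l 0)
    (Lpay : ℝ)
    (hLpay : Lpay = μs * (l 1 - b * (1 - μ) + |b| * c)
        + (1 - μs) * (l 0 - b * (0 - μ) + |b| * c)) :
    Lpay ∈
      Set.Icc
        (sInf ((fun m : ℝ => m * l 1 + (1 - m) * l 0) '' Set.Icc (μ - c) (μ + c)))
        (sSup ((fun m : ℝ => m * l 1 + (1 - m) * l 0) '' Set.Icc (μ - c) (μ + c))) ∧
    Lpay = sSup ((fun m : ℝ => m * l 1 + (1 - m) * l 0) '' Set.Icc (μ - c) (μ + c)) := by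
  obtain ⟨hg, hl⟩ := stmt3_aux μ c b (l 0) (l 1) hc.1 hb
  have hsup := hg.csSup_eq
  have hinf := hl.csInf_eq
  have hL : Lpay = l 0 + μ * b + |b| * c := by rw [hLpay, hb]; ring
  rw [hsup, hinf, hL]
  have hab := abs_nonneg b
  exact ⟨⟨by nlinarith [hc.1], le_refl _⟩, rfl⟩
end

section
/- Multiclass maximum expected loss formula: let K ≥ 1, μ ∈ Δ^K (the probability simplex in ℝ^K), c ∈ ℝ_+^K, and l ∈ ℝ^K a loss vector. Then sup over μ̃ ∈ Δ^K with μ̃ ∈ [μ−c, μ+c] (componentwise) of ⟨μ̃, l⟩ equals ⟨μ, l⟩ + inf_{γ∈ℝ} ⟨c, |l − γ·1|⟩, where |·| is taken componentwise and 1 is the all-ones vector, provided the feasible set is nonempty and the constraint set {δμ ∈ [−c,c] : ⟨δμ, 1⟩ = 0} captures the deviations (i.e., μ+δμ remains in [0,1]^K for all such δμ). -/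
open Finset

/-- Three-way split of a sum according to comparison of `l i` with `γ`. -/
lemma stmt5_trisum {K : ℕ} (l : Fin K → ℝ) (γ : ℝ) (g : Fin K → ℝ) :
    ∑ i, g i = (∑ i ∈ univ.filter (fun i => l i < γ), g i)
      + (∑ i ∈ univ.filter (fun i => l i = γ), g i)
      + (∑ i ∈ univ.filter (fun i => γ < l i), g i) := by
  classical
  rw [← Finset.sum_filter_add_sum_filter_not univ (fun i => l i < γ) g]
  rw [← Finset.sum_filter_add_sum_filter_not (univ.filter fun i => ¬ l i < γ)
    (fun i => l i = γ) g, Finset.filter_filter, Finset.filter_filter, add_assoc]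
  have h1 : univ.filter (fun a => ¬ l a < γ ∧ l a = γ)
      = univ.filter (fun i => l i = γ) := by
    ext i; simp only [Finset.mem_filter, mem_univ, true_and]
    constructor
    · rintro ⟨_, h⟩; exact h
    · intro h; exact ⟨by simp [h], h⟩
  have h2 : univ.filter (fun a => ¬ l a < γ ∧ ¬ l a = γ)
      = univ.filter (fun i => γ < l i) := by
    ext i; simp only [Finset.mem_filter, mem_univ, true_and, not_lt]
    constructor
    · rintro ⟨hle, hne⟩; exact lt_of_le_of_ne hle (Ne.symm hne)
    · intro h; exact ⟨le_of_lt h, ne_of_gt h⟩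
  rw [h1, h2]

/-- Multiclass maximum expected loss formula: the supremum of `⟨μ̃, l⟩` over
distributions `μ̃` in the simplex with `μ̃ ∈ [μ-c, μ+c]` componentwise equals
`⟨μ, l⟩ + inf_γ ⟨c, |l - γ1|⟩`, provided all componentwise deviations
`δ ∈ [-c,c]` with `⟨δ,1⟩ = 0` keep `μ + δ` inside `[0,1]^K`. -/
theorem stmt_5 (K : ℕ) (hK : 1 ≤ K) (μ c l : Fin K → ℝ)
    (hμ0 : ∀ i, 0 ≤ μ i) (hμ1 : ∑ i, μ i = 1) (hc : ∀ i, 0 ≤ c i)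
    (hfeas : ∀ δ : Fin K → ℝ, (∀ i, |δ i| ≤ c i) → (∑ i, δ i) = 0 →
      ∀ i, μ i + δ i ∈ Set.Icc (0 : ℝ) 1) :
    sSup {x : ℝ | ∃ μ' : Fin K → ℝ, (∀ i, 0 ≤ μ' i) ∧ (∑ i, μ' i) = 1 ∧
        (∀ i, |μ' i - μ i| ≤ c i) ∧ x = ∑ i, μ' i * l i}
      = (∑ i, μ i * l i) +
        sInf (Set.range fun γ : ℝ => ∑ i, c i * |l i - γ|) := by
  classical
  haveI : Nonempty (Fin K) := ⟨⟨0, hK⟩⟩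
  set S : Set ℝ := {x : ℝ | ∃ μ' : Fin K → ℝ, (∀ i, 0 ≤ μ' i) ∧ (∑ i, μ' i) = 1 ∧
      (∀ i, |μ' i - μ i| ≤ c i) ∧ x = ∑ i, μ' i * l i} with hS
  set f : ℝ → ℝ := fun γ => ∑ i, c i * |l i - γ| with hf
  -- Weak duality: every element of S is at most ⟨μ,l⟩ + f γ for every γ.
  have hub : ∀ γ : ℝ, ∀ x ∈ S, x ≤ (∑ i, μ i * l i) + f γ := by
    intro γ x hx
    obtain ⟨μ', h0, h1, hbd, rfl⟩ := hx
    have hδsum : ∑ i, (μ' i - μ i) = 0 := by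
      rw [Finset.sum_sub_distrib, hμ1, h1]; ring
    have key : ∑ i, μ' i * l i
        = ∑ i, μ i * l i + ∑ i, (μ' i - μ i) * (l i - γ)
          + (∑ i, (μ' i - μ i)) * γ := by
      rw [Finset.sum_mul, ← Finset.sum_add_distrib, ← Finset.sum_add_distrib]
      apply Finset.sum_congr rfl; intro i _; ring
    rw [hδsum, zero_mul, add_zero] at key
    have hle : ∑ i, (μ' i - μ i) * (l i - γ) ≤ f γ := by
      apply Finset.sum_le_sum; intro i _
      calc (μ' i - μ i) * (l i - γ) ≤ |(μ' i - μ i) * (l i - γ)| := le_abs_self _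
        _ = |μ' i - μ i| * |l i - γ| := abs_mul _ _
        _ ≤ c i * |l i - γ| := by
            apply mul_le_mul_of_nonneg_right (hbd i) (abs_nonneg _)
    linarith
  -- construct the weighted median γ*
  set W : ℝ := ∑ i, c i with hW
  have hW0 : 0 ≤ W := Finset.sum_nonneg fun i _ => hc i
  set G : Finset (Fin K) :=
    univ.filter (fun j => W / 2 ≤ ∑ i ∈ univ.filter (fun i => l i ≤ l j), c i) with hG
  have hGne : G.Nonempty := by
    obtain ⟨j0, -, hj0⟩ := Finset.exists_max_image univ l ⟨Classical.arbitrary _, mem_univ _⟩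
    refine ⟨j0, Finset.mem_filter.mpr ⟨mem_univ _, ?_⟩⟩
    have : univ.filter (fun i => l i ≤ l j0) = univ := by
      apply Finset.filter_true_of_mem; intro i _; exact hj0 i (mem_univ i)
    rw [this]; linarith
  obtain ⟨js, hjsG, hjsmin⟩ := Finset.exists_min_image G l hGne
  set γs : ℝ := l js with hγs
  set A : ℝ := ∑ i ∈ univ.filter (fun i => γs < l i), c i with hA
  set B : ℝ := ∑ i ∈ univ.filter (fun i => l i < γs), c i with hB
  set C : ℝ := ∑ i ∈ univ.filter (fun i => l i = γs), c i with hC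
  have hC0 : 0 ≤ C := Finset.sum_nonneg fun i _ => hc i
  have hABC : B + C + A = W := (stmt5_trisum l γs c).symm
  have hBC : W / 2 ≤ B + C := by
    have hmemG := (Finset.mem_filter.mp hjsG).2
    have heq : univ.filter (fun i => l i ≤ γs)
        = univ.filter (fun i => l i < γs) ∪ univ.filter (fun i => l i = γs) := by
      ext i; simp only [Finset.mem_union, Finset.mem_filter, mem_univ, true_and]
      constructor
      · intro h; rcases lt_or_eq_of_le h with h | h; exacts [Or.inl h, Or.inr h]
      · rintro (h | h); exacts [le_of_lt h, le_of_eq h]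
    have hdisj : Disjoint (univ.filter (fun i => l i < γs))
        (univ.filter (fun i => l i = γs)) := by
      rw [Finset.disjoint_left]
      intro i h1 h2
      simp only [Finset.mem_filter, mem_univ, true_and] at h1 h2
      exact absurd h2 (ne_of_lt h1)
    calc W / 2 ≤ ∑ i ∈ univ.filter (fun i => l i ≤ γs), c i := hmemG
      _ = B + C := by rw [heq, Finset.sum_union hdisj]
  have hB2 : B ≤ W / 2 := by
    rcases Finset.eq_empty_or_nonempty (univ.filter (fun i => l i < γs)) with he | hne
    · rw [hB, he, Finset.sum_empty]; linarith
    · obtain ⟨m, hmmem, hm⟩ := Finset.exists_max_image _ l hne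
      have hmlt : l m < γs := (Finset.mem_filter.mp hmmem).2
      have hmG : m ∉ G := by
        intro hmG; exact absurd (hjsmin m hmG) (not_le.mpr hmlt)
      have hnot : ¬ (W / 2 ≤ ∑ i ∈ univ.filter (fun i => l i ≤ l m), c i) := by
        intro h; exact hmG (Finset.mem_filter.mpr ⟨mem_univ _, h⟩)
      have heq : univ.filter (fun i => l i ≤ l m) = univ.filter (fun i => l i < γs) := by
        ext i; simp only [Finset.mem_filter, mem_univ, true_and]
        constructor
        · intro h; exact lt_of_le_of_lt h hmlt
        · intro h; exact hm i (Finset.mem_filter.mpr ⟨mem_univ _, h⟩)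
      rw [hB, ← heq]; linarith [not_le.mp hnot]
  have hA2 : A ≤ W / 2 := by linarith
  have hABdiff : |A - B| ≤ C := by
    rw [abs_le]; constructor <;> linarith
  -- the optimal deviation δ
  set t : ℝ := if C = 0 then 0 else (B - A) / C with ht
  have htabs : |t| ≤ 1 := by
    rw [ht]; split_ifs with h
    · simp
    · rw [abs_div, abs_of_nonneg hC0, div_le_one (lt_of_le_of_ne hC0 (Ne.symm h))]
      rw [abs_sub_comm] at hABdiff; exact hABdiff
  have htC : t * C = B - A := by
    rw [ht]; split_ifs with h
    · rw [h] at hABdiff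
      have h2 : |A - B| = 0 := le_antisymm hABdiff (abs_nonneg _)
      have h3 := abs_eq_zero.mp h2
      rw [h]
      have hAB : A = B := by linarith
      rw [hAB]; ring
    · field_simp
  set δ : Fin K → ℝ := fun i =>
    if γs < l i then c i else if l i < γs then -(c i) else c i * t with hδ
  have hδabs : ∀ i, |δ i| ≤ c i := by
    intro i; rw [hδ]; dsimp only; split_ifs with h1 h2
    · rw [abs_of_nonneg (hc i)]
    · rw [abs_neg, abs_of_nonneg (hc i)]
    · rw [abs_mul, abs_of_nonneg (hc i)]
      calc c i * |t| ≤ c i * 1 := mul_le_mul_of_nonneg_left htabs (hc i)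
        _ = c i := mul_one _
  -- sums of δ over the three regions
  have hsplit : ∀ g : Fin K → ℝ, ∑ i, δ i * g i
      = (∑ i ∈ univ.filter (fun i => l i < γs), -(c i) * g i)
      + (∑ i ∈ univ.filter (fun i => l i = γs), (c i * t) * g i)
      + (∑ i ∈ univ.filter (fun i => γs < l i), c i * g i) := by
    intro g
    rw [stmt5_trisum l γs (fun i => δ i * g i)]
    congr 1; congr 1
    · apply Finset.sum_congr rfl; intro i hi
      have h := (Finset.mem_filter.mp hi).2
      rw [hδ]; dsimp only
      rw [if_neg (by linarith), if_pos h]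
    · apply Finset.sum_congr rfl; intro i hi
      have h := (Finset.mem_filter.mp hi).2
      rw [hδ]; dsimp only
      rw [if_neg (by rw [h]; exact lt_irrefl _), if_neg (by rw [h]; exact lt_irrefl _)]
    · apply Finset.sum_congr rfl; intro i hi
      have h := (Finset.mem_filter.mp hi).2
      rw [hδ]; dsimp only; rw [if_pos h]
  have hδsum : ∑ i, δ i = 0 := by
    have hsp := hsplit (fun _ => 1)
    simp only [mul_one] at hsp
    rw [hsp, Finset.sum_neg_distrib, ← Finset.sum_mul, ← hB, ← hA, ← hC]
    linarith [htC, mul_comm C t]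
  have hδl : ∑ i, δ i * l i = f γs := by
    have h1 : ∑ i, δ i * l i = ∑ i, δ i * (l i - γs) := by
      have key : ∑ i, δ i * l i
          = ∑ i, δ i * (l i - γs) + (∑ i, δ i) * γs := by
        rw [Finset.sum_mul, ← Finset.sum_add_distrib]
        apply Finset.sum_congr rfl; intro i _; ring
      rw [hδsum, zero_mul, add_zero] at key; exact key
    have hfγs : f γs = ∑ i, c i * |l i - γs| := rfl
    rw [h1, hsplit (fun i => l i - γs), hfγs,
      stmt5_trisum l γs (fun i => c i * |l i - γs|)]
    congr 1; congr 1
    · apply Finset.sum_congr rfl; intro i hi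
      have h := (Finset.mem_filter.mp hi).2
      rw [abs_of_neg (by linarith : l i - γs < 0)]; ring
    · apply Finset.sum_congr rfl; intro i hi
      have h := (Finset.mem_filter.mp hi).2
      rw [h]; simp
    · apply Finset.sum_congr rfl; intro i hi
      have h := (Finset.mem_filter.mp hi).2
      rw [abs_of_pos (by linarith : 0 < l i - γs)]
  -- the point attaining the value ⟨μ,l⟩ + f γ*
  have hmem : (∑ i, μ i * l i) + f γs ∈ S := by
    refine ⟨fun i => μ i + δ i, ?_, ?_, ?_, ?_⟩
    · intro i; exact (hfeas δ hδabs hδsum i).1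
    · rw [Finset.sum_add_distrib, hμ1, hδsum, add_zero]
    · intro i; simpa using hδabs i
    · rw [← hδl, ← Finset.sum_add_distrib]
      apply Finset.sum_congr rfl; intro i _; ring
  have hSne : S.Nonempty := ⟨_, hmem⟩
  have hbdd : BddAbove S := ⟨(∑ i, μ i * l i) + f γs, fun x hx => hub γs x hx⟩
  have hrne : (Set.range f).Nonempty := Set.range_nonempty f
  have hbb : BddBelow (Set.range f) := by
    refine ⟨0, ?_⟩
    rintro b ⟨γ, rfl⟩
    exact Finset.sum_nonneg fun i _ => mul_nonneg (hc i) (abs_nonneg _)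
  apply le_antisymm
  · have hall : ∀ γ, sSup S ≤ (∑ i, μ i * l i) + f γ :=
      fun γ => csSup_le hSne (hub γ)
    have h2 : sSup S - (∑ i, μ i * l i) ≤ sInf (Set.range f) := by
      apply le_csInf hrne
      rintro b ⟨γ, rfl⟩
      linarith [hall γ]
    linarith
  · have h1 : sInf (Set.range f) ≤ f γs := csInf_le hbb ⟨γs, rfl⟩
    have h2 : (∑ i, μ i * l i) + f γs ≤ sSup S := le_csSup hbdd hmem
    linarith
end

section
/- Follow-the-leader regret for online least squares: let α_t, β_t be real sequences with |β_t| ≤ M₁ and |α_t/β_t| ≤ M₂ for all t (with convention 0/0=0, β_1 ≠ 0), and define λ_t = argmin_{λ∈ℝ} Σ_{τ=1}^{t−1} (α_τ + β_τ λ)^2 (with λ_1 arbitrary in [−M₂, M₂]). Then Σ_{t=1}^T (α_t + β_t λ_t)^2 − inf_{λ∈ℝ} Σ_{t=1}^T (α_t + β_t λ)^2 ≤ 8·M₂²·M₁²·log(T+1). -/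
open Finset



lemma ftl_pade {u : ℝ} (hu : 1 ≤ u) : 2*(u-1)/(u+1) ≤ Real.log u := by
  have h0 : (0:ℝ) < 1 := one_pos
  have key : MonotoneOn (fun x : ℝ => Real.log x - 2*(x-1)/(x+1)) (Set.Ici 1) := by
    apply monotoneOn_of_deriv_nonneg (convex_Ici 1)
    · apply ContinuousOn.sub
      · exact Real.continuousOn_log.mono (by intro x hx; simp at hx ⊢; linarith)
      · apply ContinuousOn.div
        · fun_prop
        · fun_prop
        · intro x hx; simp at hx; intro h; linarith
    · intro x hx
      simp only [interior_Ici, Set.mem_Ioi] at hx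
      apply DifferentiableAt.differentiableWithinAt
      apply DifferentiableAt.sub
      · exact Real.differentiableAt_log (by linarith)
      · apply DifferentiableAt.div <;> first | fun_prop | (intro h; linarith) 
    · intro x hx
      simp only [interior_Ici, Set.mem_Ioi] at hx
      have hx0 : x ≠ 0 := by linarith
      have hx1 : x + 1 ≠ 0 := by linarith
      have hd : HasDerivAt (fun x : ℝ => Real.log x - 2*(x-1)/(x+1))
          (1/x - (2*(x+1) - 2*(x-1)*1)/(x+1)^2) x := by
        have h1 := Real.hasDerivAt_log hx0
        have h2 : HasDerivAt (fun x : ℝ => 2*(x-1)) 2 x := by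
          simpa using ((hasDerivAt_id x).sub_const 1).const_mul 2
        have h3 : HasDerivAt (fun x : ℝ => x + 1) 1 x := by
          simpa using (hasDerivAt_id x).add_const 1
        have := h1.sub (h2.div h3 hx1)
        rw [one_div]; exact this
      rw [hd.deriv]
      have : 1/x - (2*(x+1) - 2*(x-1)*1)/(x+1)^2 = (x-1)^2/(x*(x+1)^2) := by
        field_simp; ring
      rw [this]
      positivity
  have h1 := key (Set.self_mem_Ici) (Set.mem_Ici.2 hu) hu
  simp at h1
  linarith

lemma ftl_step (M₂ m b2 s0 r q : ℝ) (hm : 0 < m) (hM₂ : 0 ≤ M₂)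
    (hs0 : 0 ≤ s0) (hb2 : 0 < b2) (hb2m : b2 ≤ m)
    (hr : r^2 ≤ 4*M₂^2*b2)
    (hq : q = s0 * r / (s0 + b2)) :
    r^2 - q^2 ≤ 8*M₂^2*m*(Real.log (s0 + b2 + m) - Real.log (s0 + m)) := by
  have hs1 : 0 < s0 + b2 := by linarith
  have h1 : r^2 - q^2 = r^2*((s0+b2)^2 - s0^2)/(s0+b2)^2 := by
    rw [hq]; field_simp
  have hu : 1 ≤ (s0+b2+m)/(s0+m) := by
    rw [le_div_iff₀ (by linarith)]; linarith
  have hp := ftl_pade hu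
  have hlogdiv : Real.log ((s0+b2+m)/(s0+m)) = Real.log (s0+b2+m) - Real.log (s0+m) :=
    Real.log_div (by positivity) (by positivity)
  have heq : 2*((s0+b2+m)/(s0+m) - 1)/((s0+b2+m)/(s0+m) + 1) = 2*b2/(2*s0+b2+2*m) := by
    have h0 : s0 + m ≠ 0 := by positivity
    field_simp
    ring
  have hlog : 2*b2/(2*s0+b2+2*m) ≤ Real.log (s0+b2+m) - Real.log (s0+m) := by
    rw [← hlogdiv, ← heq]; exact hp
  have hK : (0:ℝ) ≤ b2*(2*s0+b2)*(2*s0+b2+2*m) := by positivity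
  have hstep : r^2*((s0+b2)^2 - s0^2)/(s0+b2)^2 ≤ 8*M₂^2*m*(2*b2/(2*s0+b2+2*m)) := by
    have h2 : 8*M₂^2*m*(2*b2/(2*s0+b2+2*m)) = 16*M₂^2*m*b2/(2*s0+b2+2*m) := by ring
    rw [h2, div_le_div_iff₀ (by positivity) (by linarith)]
    nlinarith [mul_nonneg (sub_nonneg.2 hr) hK,
      mul_nonneg (mul_nonneg (mul_nonneg (sq_nonneg M₂) hb2.le) (sub_nonneg.2 hb2m)) (sq_nonneg (2*s0+b2)),
      mul_nonneg (mul_nonneg (mul_nonneg (sq_nonneg M₂) hb2.le) hm.le) (sq_nonneg b2)]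
  calc r^2 - q^2 = r^2*((s0+b2)^2 - s0^2)/(s0+b2)^2 := h1
    _ ≤ 8*M₂^2*m*(2*b2/(2*s0+b2+2*m)) := hstep
    _ ≤ 8*M₂^2*m*(Real.log (s0+b2+m) - Real.log (s0+m)) := by
        apply mul_le_mul_of_nonneg_left hlog (by positivity)

noncomputable def ftlS (β : ℕ → ℝ) (n : ℕ) : ℝ := ∑ t ∈ Finset.range n, (β t)^2
noncomputable def ftlA (α β : ℕ → ℝ) (n : ℕ) : ℝ := ∑ t ∈ Finset.range n, α t * β t

lemma ftl_sum_sq (α β : ℕ → ℝ) (n : ℕ) (y : ℝ) :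
    ∑ t ∈ Finset.range n, (α t + β t * y) ^ 2
      = (∑ t ∈ Finset.range n, (α t)^2)
        + 2 * ftlA α β n * y + ftlS β n * y^2 := by
  induction n with
  | zero => simp [ftlS, ftlA]
  | succ n ih => simp [Finset.sum_range_succ, ftlS, ftlA, ih]; ring

/-- Follow-the-leader regret for online least squares: if `λ_t` minimizes the
past cumulative quadratic loss `∑_{τ<t} (α_τ + β_τ λ)²` (with `λ_0` arbitrary in
`[-M₂, M₂]`), `|β_t| ≤ M₁` and `|α_t / β_t| ≤ M₂` (with `0/0 = 0`), then the
regret versus the best fixed `λ` is at most `8 M₂² M₁² log (T+1)`. -/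
theorem stmt_9 (T : ℕ) (M₁ M₂ : ℝ) (α β lam : ℕ → ℝ)
    (hβ : ∀ t < T, |β t| ≤ M₁) (hαβ : ∀ t < T, |α t / β t| ≤ M₂)
    (hβ0 : β 0 ≠ 0)
    (hlam0 : |lam 0| ≤ M₂)
    (hlam : ∀ t, 0 < t → t < T → ∀ x : ℝ,
      (∑ τ ∈ Finset.range t, (α τ + β τ * lam t) ^ 2)
        ≤ ∑ τ ∈ Finset.range t, (α τ + β τ * x) ^ 2) :
    ∀ x : ℝ,
      (∑ t ∈ Finset.range T, (α t + β t * lam t) ^ 2)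
          - (∑ t ∈ Finset.range T, (α t + β t * x) ^ 2)
        ≤ 8 * M₂ ^ 2 * M₁ ^ 2 * Real.log (T + 1) := by
  intro x
  rcases Nat.eq_zero_or_pos T with hT0 | hT
  · subst hT0; simp
  have hM₁ : 0 < M₁ := lt_of_lt_of_le (abs_pos.2 hβ0) (hβ 0 hT)
  have hM₂ : 0 ≤ M₂ := le_trans (abs_nonneg _) hlam0
  have hm : 0 < M₁^2 := by positivity
  have hS0 : ftlS β 0 = 0 := by simp [ftlS]
  have hA0 : ftlA α β 0 = 0 := by simp [ftlA]
  have hSnonneg : ∀ n, 0 ≤ ftlS β n :=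
    fun n => Finset.sum_nonneg (fun i _ => sq_nonneg _)
  have hSsucc : ∀ n, ftlS β (n+1) = ftlS β n + (β n)^2 := by
    intro n; simp [ftlS, Finset.sum_range_succ]
  have hAsucc : ∀ n, ftlA α β (n+1) = ftlA α β n + α n * β n := by
    intro n; simp [ftlA, Finset.sum_range_succ]
  have hSpos : ∀ n, 0 < n → 0 < ftlS β n := by
    intro n hn
    have h0 : (0:ℕ) ∈ Finset.range n := by simpa using hn
    have h1 := Finset.single_le_sum (f := fun t => (β t)^2) (fun i _ => sq_nonneg _) h0
    have hb : 0 < (β 0)^2 := by positivity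
    exact lt_of_lt_of_le hb h1
  have hAbd : ∀ n, n ≤ T → |ftlA α β n| ≤ M₂ * ftlS β n := by
    intro n hn
    calc |ftlA α β n| ≤ ∑ t ∈ Finset.range n, |α t * β t| :=
          Finset.abs_sum_le_sum_abs _ _
      _ ≤ ∑ t ∈ Finset.range n, M₂ * (β t)^2 := by
          apply Finset.sum_le_sum
          intro t ht
          have htT : t < T := lt_of_lt_of_le (Finset.mem_range.1 ht) hn
          by_cases hb : β t = 0
          · simp [hb]
          · have hab : α t * β t = (α t / β t) * (β t)^2 := by
              field_simp
            rw [hab, abs_mul, abs_of_nonneg (sq_nonneg (β t))]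
            exact mul_le_mul_of_nonneg_right (hαβ t htT) (sq_nonneg _)
      _ = M₂ * ftlS β n := by rw [ftlS, Finset.mul_sum]
  -- first-order condition
  have hfoc : ∀ t, t < T → ftlS β t * lam t = - ftlA α β t := by
    intro t htT
    rcases Nat.eq_zero_or_pos t with rfl | ht
    · simp [hS0, hA0]
    · have hSt := hSpos t ht
      have h := hlam t ht htT (-ftlA α β t / ftlS β t)
      rw [ftl_sum_sq, ftl_sum_sq] at h
      have h2 : 2 * ftlA α β t * (-ftlA α β t / ftlS β t)
          + ftlS β t * (-ftlA α β t / ftlS β t)^2 = -(ftlA α β t)^2 / ftlS β t := by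
        field_simp; ring
      have h3 : 2 * ftlA α β t * lam t + ftlS β t * lam t ^2 ≤ -(ftlA α β t)^2 / ftlS β t := by
        linarith
      have h4 : (2 * ftlA α β t * lam t + ftlS β t * lam t ^2) * ftlS β t ≤ -(ftlA α β t)^2 :=
        (le_div_iff₀ hSt).1 h3
      have h5 : (ftlS β t * lam t + ftlA α β t)^2 ≤ 0 := by nlinarith
      have h6 : (ftlS β t * lam t + ftlA α β t)^2 = 0 :=
        le_antisymm h5 (sq_nonneg _)
      have := pow_eq_zero_iff (two_ne_zero) |>.1 h6
      linarith
  have hlambd : ∀ t, t < T → |lam t| ≤ M₂ := by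
    intro t htT
    rcases Nat.eq_zero_or_pos t with rfl | ht
    · exact hlam0
    · have hSt := hSpos t ht
      have h1 : ftlS β t * |lam t| ≤ M₂ * ftlS β t := by
        calc ftlS β t * |lam t| = |ftlS β t * lam t| := by
              rw [abs_mul, abs_of_pos hSt]
          _ = |ftlA α β t| := by rw [hfoc t htT, abs_neg]
          _ ≤ M₂ * ftlS β t := hAbd t (le_of_lt htT)
      nlinarith
  -- the leader sequence
  set ℓ : ℕ → ℝ := fun n => - ftlA α β n / ftlS β n with hℓdef
  have hℓeq : ∀ n, 0 < n → ftlS β n * ℓ n = - ftlA α β n := by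
    intro n hn
    have := hSpos n hn
    simp only [hℓdef]
    field_simp
  -- be-the-leader
  have hbtl : ∀ n, ∀ y : ℝ,
      (∑ t ∈ Finset.range n, (α t + β t * ℓ (t+1))^2)
        ≤ ∑ t ∈ Finset.range n, (α t + β t * y)^2 := by
    intro n
    induction n with
    | zero => intro y; simp
    | succ n ih =>
      intro y
      have hS' := hSpos (n+1) (Nat.succ_pos n)
      have hl := hℓeq (n+1) (Nat.succ_pos n)
      calc ∑ t ∈ Finset.range (n+1), (α t + β t * ℓ (t+1))^2
          = (∑ t ∈ Finset.range n, (α t + β t * ℓ (t+1))^2)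
              + (α n + β n * ℓ (n+1))^2 := Finset.sum_range_succ _ _
        _ ≤ (∑ t ∈ Finset.range n, (α t + β t * ℓ (n+1))^2)
              + (α n + β n * ℓ (n+1))^2 := by linarith [ih (ℓ (n+1))]
        _ = ∑ t ∈ Finset.range (n+1), (α t + β t * ℓ (n+1))^2 :=
            (Finset.sum_range_succ _ _).symm
        _ ≤ ∑ t ∈ Finset.range (n+1), (α t + β t * y)^2 := by
            rw [ftl_sum_sq, ftl_sum_sq]
            nlinarith [sq_nonneg (ftlS β (n+1) * y + ftlA α β (n+1)), hl, hS',
              sq_nonneg (ℓ (n+1)), sq_nonneg y]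
  -- per-step bound
  have key : ∀ t ∈ Finset.range T,
      (α t + β t * lam t)^2 - (α t + β t * ℓ (t+1))^2
        ≤ 8*M₂^2*M₁^2*(Real.log (ftlS β (t+1) + M₁^2) - Real.log (ftlS β t + M₁^2)) := by
    intro t ht
    have htT := Finset.mem_range.1 ht
    by_cases hb : β t = 0
    · rw [hSsucc t, hb]; norm_num
    · have hb2pos : 0 < (β t)^2 := by positivity
      have hb2m : (β t)^2 ≤ M₁^2 := by
        rw [← sq_abs]; exact pow_le_pow_left₀ (abs_nonneg _) (hβ t htT) 2
      have hα : |α t| ≤ M₂ * |β t| := by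
        have h := hαβ t htT
        rw [abs_div] at h
        have hbpos : 0 < |β t| := abs_pos.2 hb
        calc |α t| = |α t| / |β t| * |β t| := by field_simp
          _ ≤ M₂ * |β t| := mul_le_mul_of_nonneg_right h (abs_nonneg _)
      have hL := hlambd t htT
      have hr : (α t + β t * lam t)^2 ≤ 4*M₂^2*(β t)^2 := by
        have h1 : |α t + β t * lam t| ≤ 2*(M₂*|β t|) := by
          calc |α t + β t * lam t| ≤ |α t| + |β t * lam t| := abs_add_le _ _
            _ = |α t| + |β t| * |lam t| := by rw [abs_mul]
            _ ≤ M₂ * |β t| + |β t| * M₂ := by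
                have := mul_le_mul_of_nonneg_left hL (abs_nonneg (β t))
                linarith
            _ = 2*(M₂*|β t|) := by ring
        have h2 := pow_le_pow_left₀ (abs_nonneg _) h1 2
        rw [sq_abs] at h2
        calc (α t + β t * lam t)^2 ≤ (2*(M₂*|β t|))^2 := h2
          _ = 4 * M₂^2 * |β t| ^ 2 := by ring
          _ = 4*M₂^2*(β t)^2 := by rw [sq_abs]
      have hS'pos : 0 < ftlS β (t+1) := hSpos (t+1) (Nat.succ_pos t)
      have hl := hℓeq (t+1) (Nat.succ_pos t)
      have hproj : α t + β t * ℓ (t+1)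
          = ftlS β t * (α t + β t * lam t) / (ftlS β t + (β t)^2) := by
        have hden : 0 < ftlS β t + (β t)^2 := by nlinarith [hSnonneg t]
        rw [eq_div_iff hden.ne']
        have h1 : ftlS β (t+1) * ℓ (t+1) = ftlS β t * lam t - α t * β t := by
          rw [hl, hAsucc t]
          have := hfoc t htT
          linarith
        have h2 := hSsucc t
        linear_combination β t * h1 - β t * ℓ (t+1) * h2
      have := ftl_step M₂ (M₁^2) ((β t)^2) (ftlS β t)
        (α t + β t * lam t) (α t + β t * ℓ (t+1)) hm hM₂ (hSnonneg t) hb2pos hb2m hr hproj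
      rw [hSsucc t]
      exact this
  -- combine
  have hbtlT := hbtl T x
  have hsum : (∑ t ∈ Finset.range T, (α t + β t * lam t)^2)
      - (∑ t ∈ Finset.range T, (α t + β t * x)^2)
      ≤ ∑ t ∈ Finset.range T, ((α t + β t * lam t)^2 - (α t + β t * ℓ (t+1))^2) := by
    rw [Finset.sum_sub_distrib]
    linarith
  have htel : ∑ t ∈ Finset.range T,
      (8*M₂^2*M₁^2*(Real.log (ftlS β (t+1) + M₁^2) - Real.log (ftlS β t + M₁^2)))
      = 8*M₂^2*M₁^2*(Real.log (ftlS β T + M₁^2) - Real.log (ftlS β 0 + M₁^2)) := by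
    rw [← Finset.mul_sum, Finset.sum_range_sub (fun n => Real.log (ftlS β n + M₁^2))]
  have hST : ftlS β T ≤ T * M₁^2 := by
    calc ftlS β T ≤ ∑ t ∈ Finset.range T, M₁^2 := by
          apply Finset.sum_le_sum
          intro t ht
          rw [← sq_abs]
          exact pow_le_pow_left₀ (abs_nonneg _) (hβ t (Finset.mem_range.1 ht)) 2
      _ = T * M₁^2 := by rw [Finset.sum_const, Finset.card_range]; ring
  have hfin : Real.log (ftlS β T + M₁^2) - Real.log (ftlS β 0 + M₁^2) ≤ Real.log (T+1) := by
    rw [hS0, zero_add]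
    have h1 : Real.log (ftlS β T + M₁^2) ≤ Real.log ((T+1)*M₁^2) := by
      apply Real.log_le_log (by nlinarith [hSnonneg T])
      push_cast
      nlinarith
    have h2 : Real.log ((T+1:ℝ)*M₁^2) = Real.log (T+1) + Real.log (M₁^2) := by
      rw [Real.log_mul (by positivity) (ne_of_gt hm)]
    linarith
  calc (∑ t ∈ Finset.range T, (α t + β t * lam t)^2)
      - (∑ t ∈ Finset.range T, (α t + β t * x)^2)
      ≤ ∑ t ∈ Finset.range T, ((α t + β t * lam t)^2 - (α t + β t * ℓ (t+1))^2) := hsum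
    _ ≤ ∑ t ∈ Finset.range T,
        (8*M₂^2*M₁^2*(Real.log (ftlS β (t+1) + M₁^2) - Real.log (ftlS β t + M₁^2))) :=
        Finset.sum_le_sum key
    _ = 8*M₂^2*M₁^2*(Real.log (ftlS β T + M₁^2) - Real.log (ftlS β 0 + M₁^2)) := htel
    _ ≤ 8*M₂^2*M₁^2*Real.log (T+1) := by
        apply mul_le_mul_of_nonneg_left hfin (by positivity)
end

section
/- Standard calibration as soundness: let X be a random variable, Y a {0,1}-valued random variable, μ : X → [0,1] a forecast function, c₀ ≥ 0, and U = μ(X). If |E[Y | U = u] − u| ≤ c₀ for almost every u in the range of U, then for every bounded measurable b̃ : [0,1] → ℝ, E[ b̃(U)·(μ(X) − Y) − |b̃(U)|·c₀ ] ≤ 0. Conversely, if there is a set of positive probability on which E[Y | U] − U > c₀ (or < −c₀), then some bounded b̃ makes this expectation strictly positive. -/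
open MeasureTheory

/-- Standard calibration as soundness: if the forecast `U = μf (X ·)` is calibrated
up to error `c₀` (i.e. `|E[Y | σ(U)] - U| ≤ c₀` a.e.), then every bounded measurable
bet `b̃` depending only on the forecast has non-positive expected payoff after the
`|b̃| c₀` discount; conversely, a positive-probability violation of calibration by
more than `c₀` yields a bounded bet with strictly positive expected payoff. -/
theorem stmt_15 {Ω 𝒳 : Type*} [MeasurableSpace Ω] [MeasurableSpace 𝒳]
    (P : Measure Ω) [IsProbabilityMeasure P]
    (X : Ω → 𝒳) (hX : Measurable X)
    (μf : 𝒳 → ℝ) (hμf : Measurable μf) (hμf01 : ∀ x, μf x ∈ Set.Icc (0 : ℝ) 1)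
    (Y : Ω → ℝ) (hY : Measurable Y) (hY01 : ∀ ω, Y ω = 0 ∨ Y ω = 1)
    (c₀ : ℝ) (hc₀ : 0 ≤ c₀)
    (U : Ω → ℝ) (hU : ∀ ω, U ω = μf (X ω))
    (m : MeasurableSpace Ω) (hm : m = MeasurableSpace.comap U inferInstance) :
    ((∀ᵐ ω ∂P, |(P[Y|m]) ω - U ω| ≤ c₀) →
      ∀ b : ℝ → ℝ, Measurable b → (∃ C : ℝ, ∀ x, |b x| ≤ C) →
        (∫ ω, (b (U ω) * (U ω - Y ω) - |b (U ω)| * c₀) ∂P) ≤ 0) ∧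
    ((0 < P {ω | (P[Y|m]) ω - U ω > c₀} ∨ 0 < P {ω | (P[Y|m]) ω - U ω < -c₀}) →
      ∃ b : ℝ → ℝ, Measurable b ∧ (∃ C : ℝ, ∀ x, |b x| ≤ C) ∧
        0 < ∫ ω, (b (U ω) * (U ω - Y ω) - |b (U ω)| * c₀) ∂P) := by
  rename_i mΩ m𝒳 hPprob
  have hUmeas : Measurable[mΩ] U := by
    have hUeq : U = fun ω => μf (X ω) := funext hU
    rw [hUeq]; exact hμf.comp hX
  have hle : m ≤ mΩ := by
    rw [hm]; exact hUmeas.comap_le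
  have hUm : Measurable[m] U := by
    rw [hm]; exact fun s hs => ⟨s, hs, rfl⟩
  set g : Ω → ℝ := P[Y|m] with hg_def
  have hg_int : Integrable g P := integrable_condExp
  have hg_sm : StronglyMeasurable[m] g := stronglyMeasurable_condExp
  -- integrability of bounded measurable functions
  have hbdd_int : ∀ (f : Ω → ℝ), Measurable[mΩ] f → ∀ C : ℝ, (∀ ω, |f ω| ≤ C) →
      Integrable f P := by
    intro f hf C hC
    exact Integrable.mono' (integrable_const C) hf.aestronglyMeasurable
      (Filter.Eventually.of_forall fun ω => hC ω)
  have hU_bd : ∀ ω, |U ω| ≤ 1 := by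
    intro ω
    have := hμf01 (X ω)
    rw [hU ω, abs_le]
    constructor <;> [linarith [this.1]; exact this.2]
  have hY_bd : ∀ ω, |Y ω| ≤ 1 := by
    intro ω; rcases hY01 ω with h | h <;> rw [h] <;> norm_num
  have hY_int : Integrable Y P := hbdd_int Y hY 1 hY_bd
  -- Key: for bounded measurable b, ∫ b(U)·Y = ∫ b(U)·g
  have key : ∀ b : ℝ → ℝ, Measurable b → ∀ C : ℝ, (∀ x, |b x| ≤ C) →
      ∫ ω, b (U ω) * Y ω ∂P = ∫ ω, b (U ω) * g ω ∂P := by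
    intro b hb C hC
    have hh_sm : StronglyMeasurable[m] (fun ω => b (U ω)) :=
      (hb.comp hUm).stronglyMeasurable
    have hh_meas : Measurable[mΩ] (fun ω => b (U ω)) := hb.comp hUmeas
    have hhY_int : Integrable ((fun ω => b (U ω)) * Y) P := by
      have : Integrable (fun ω => b (U ω) * Y ω) P :=
        hY_int.bdd_mul (Measurable.aestronglyMeasurable (μ := P) hh_meas) (Filter.Eventually.of_forall fun ω => hC (U ω))
      exact this
    have hce := condExp_mul_of_stronglyMeasurable_left (μ := P) hh_sm hhY_int hY_int
    calc ∫ ω, b (U ω) * Y ω ∂P = ∫ ω, ((fun ω => b (U ω)) * Y) ω ∂P := rfl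
      _ = ∫ ω, (P[(fun ω => b (U ω)) * Y|m]) ω ∂P := (integral_condExp hle).symm
      _ = ∫ ω, ((fun ω => b (U ω)) * g) ω ∂P := integral_congr_ae hce
      _ = ∫ ω, b (U ω) * g ω ∂P := rfl
  -- Key 2: expected payoff identity
  have key2 : ∀ b : ℝ → ℝ, Measurable b → ∀ C : ℝ, (∀ x, |b x| ≤ C) →
      ∫ ω, (b (U ω) * (U ω - Y ω) - |b (U ω)| * c₀) ∂P
        = ∫ ω, (b (U ω) * (U ω - g ω) - |b (U ω)| * c₀) ∂P := by
    intro b hb C hC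
    have hh_meas : Measurable[mΩ] (fun ω => b (U ω)) := hb.comp hUmeas
    have h1 : Integrable (fun ω => b (U ω) * U ω) P :=
      (hbdd_int U hUmeas 1 hU_bd).bdd_mul (Measurable.aestronglyMeasurable (μ := P) hh_meas)
        (Filter.Eventually.of_forall fun ω => hC (U ω))
    have h2 : Integrable (fun ω => b (U ω) * Y ω) P :=
      hY_int.bdd_mul (Measurable.aestronglyMeasurable (μ := P) hh_meas) (Filter.Eventually.of_forall fun ω => hC (U ω))
    have h3 : Integrable (fun ω => b (U ω) * g ω) P :=
      hg_int.bdd_mul (Measurable.aestronglyMeasurable (μ := P) hh_meas) (Filter.Eventually.of_forall fun ω => hC (U ω))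
    have h4 : Integrable (fun ω => |b (U ω)| * c₀) P := by
      have habs : Measurable[mΩ] fun ω => |b (U ω)| * c₀ := (hb.abs.mul_const c₀).comp hUmeas
      refine hbdd_int _ habs (|C| * c₀) fun ω => ?_
      rw [abs_mul, abs_abs, abs_of_nonneg hc₀]
      exact mul_le_mul_of_nonneg_right ((hC (U ω)).trans (le_abs_self C)) hc₀
    have h12 : Integrable (fun ω => b (U ω) * U ω - b (U ω) * Y ω) P := h1.sub h2
    have h13 : Integrable (fun ω => b (U ω) * U ω - b (U ω) * g ω) P := h1.sub h3
    have e1 : ∫ ω, (b (U ω) * (U ω - Y ω) - |b (U ω)| * c₀) ∂P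
        = (∫ ω, b (U ω) * U ω ∂P) - (∫ ω, b (U ω) * Y ω ∂P) - ∫ ω, |b (U ω)| * c₀ ∂P := by
      calc ∫ ω, (b (U ω) * (U ω - Y ω) - |b (U ω)| * c₀) ∂P
          = ∫ ω, ((b (U ω) * U ω - b (U ω) * Y ω) - |b (U ω)| * c₀) ∂P := by
            refine integral_congr_ae (Filter.Eventually.of_forall fun ω => ?_); ring
        _ = (∫ ω, (b (U ω) * U ω - b (U ω) * Y ω) ∂P) - ∫ ω, |b (U ω)| * c₀ ∂P :=
            integral_sub h12 h4
        _ = (∫ ω, b (U ω) * U ω ∂P) - (∫ ω, b (U ω) * Y ω ∂P) - ∫ ω, |b (U ω)| * c₀ ∂P := by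
            rw [integral_sub h1 h2]
    have e2 : ∫ ω, (b (U ω) * (U ω - g ω) - |b (U ω)| * c₀) ∂P
        = (∫ ω, b (U ω) * U ω ∂P) - (∫ ω, b (U ω) * g ω ∂P) - ∫ ω, |b (U ω)| * c₀ ∂P := by
      calc ∫ ω, (b (U ω) * (U ω - g ω) - |b (U ω)| * c₀) ∂P
          = ∫ ω, ((b (U ω) * U ω - b (U ω) * g ω) - |b (U ω)| * c₀) ∂P := by
            refine integral_congr_ae (Filter.Eventually.of_forall fun ω => ?_); ring
        _ = (∫ ω, (b (U ω) * U ω - b (U ω) * g ω) ∂P) - ∫ ω, |b (U ω)| * c₀ ∂P :=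
            integral_sub h13 h4
        _ = (∫ ω, b (U ω) * U ω ∂P) - (∫ ω, b (U ω) * g ω ∂P) - ∫ ω, |b (U ω)| * c₀ ∂P := by
            rw [integral_sub h1 h3]
    rw [e1, e2, key b hb C hC]
  constructor
  · -- forward direction
    intro hcal b hb ⟨C, hC⟩
    rw [key2 b hb C hC]
    refine integral_nonpos_of_ae ?_
    filter_upwards [hcal] with ω hω
    have h1 : b (U ω) * (U ω - g ω) ≤ |b (U ω)| * c₀ := by
      calc b (U ω) * (U ω - g ω) ≤ |b (U ω) * (U ω - g ω)| := le_abs_self _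
        _ = |b (U ω)| * |g ω - U ω| := by rw [abs_mul, abs_sub_comm]
        _ ≤ |b (U ω)| * c₀ := mul_le_mul_of_nonneg_left hω (abs_nonneg _)
    simp only [Pi.zero_apply]
    linarith
  · -- converse
    rintro (hpos | hneg)
    · -- case: g - U > c₀ on a set of positive measure
      set A : Set Ω := {ω | g ω - U ω > c₀} with hA_def
      have hAm : MeasurableSet[m] A := by
        have : Measurable[m] (fun ω => g ω - U ω) := hg_sm.measurable.sub hUm
        exact this measurableSet_Ioi
      rw [hm] at hAm
      obtain ⟨S, hS, hSA⟩ := MeasurableSpace.measurableSet_comap.mp hAm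
      have hA_meas : MeasurableSet[mΩ] A := by rw [← hSA]; exact hUmeas hS
      refine ⟨S.indicator (fun _ => (-1 : ℝ)), (measurable_const.indicator hS),
        ⟨1, fun x => ?_⟩, ?_⟩
      · by_cases hx : x ∈ S <;> simp [Set.indicator, hx]
      · have hC : ∀ x, |S.indicator (fun _ => (-1 : ℝ)) x| ≤ 1 := by
          intro x; by_cases hx : x ∈ S <;> simp [Set.indicator, hx]
        rw [key2 _ (measurable_const.indicator hS) 1 hC]
        clear_value g
        clear hg_def hg_sm hUm hle key key2 hm m
        have hmemb : ∀ ω, (U ω ∈ S) ↔ ω ∈ A := by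
          intro ω; constructor
          · intro h; rw [← hSA]; exact h
          · intro h; rw [← hSA] at h; exact h
        have hrw : ∫ ω, (S.indicator (fun _ => (-1 : ℝ)) (U ω) * (U ω - g ω)
            - |S.indicator (fun _ => (-1 : ℝ)) (U ω)| * c₀) ∂P
            = ∫ ω, A.indicator (fun ω => g ω - U ω - c₀) ω ∂P := by
          refine integral_congr_ae (Filter.Eventually.of_forall fun ω => ?_)
          dsimp only
          by_cases hω : ω ∈ A
          · rw [Set.indicator_of_mem ((hmemb ω).mpr hω), Set.indicator_of_mem hω,
              abs_neg, abs_one]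
            ring
          · rw [Set.indicator_of_notMem (fun h => hω ((hmemb ω).mp h)),
              Set.indicator_of_notMem hω]
            simp
        rw [hrw, integral_indicator hA_meas]
        have hφ_int : IntegrableOn (fun ω => g ω - U ω - c₀) A P :=
          (((hg_int.sub (hbdd_int U hUmeas 1 hU_bd)).sub (integrable_const c₀))).integrableOn
        have hnn : 0 ≤ᵐ[P.restrict A] fun ω => g ω - U ω - c₀ := by
          rw [Filter.EventuallyLE, ae_restrict_iff' hA_meas]
          filter_upwards with ω hω
          have : g ω - U ω > c₀ := hω
          simp only [Pi.zero_apply]; linarith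
        refine (setIntegral_pos_iff_support_of_nonneg_ae hnn hφ_int).mpr ?_
        · refine lt_of_lt_of_le hpos (measure_mono ?_)
          intro ω hω
          refine ⟨?_, hω⟩
          simp only [Function.mem_support]
          have : g ω - U ω > c₀ := hω
          intro h; linarith
    · -- case: g - U < -c₀ on a set of positive measure
      set A : Set Ω := {ω | g ω - U ω < -c₀} with hA_def
      have hAm : MeasurableSet[m] A := by
        have : Measurable[m] (fun ω => g ω - U ω) := hg_sm.measurable.sub hUm
        exact this measurableSet_Iio
      rw [hm] at hAm
      obtain ⟨S, hS, hSA⟩ := MeasurableSpace.measurableSet_comap.mp hAm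
      have hA_meas : MeasurableSet[mΩ] A := by rw [← hSA]; exact hUmeas hS
      refine ⟨S.indicator (fun _ => (1 : ℝ)), (measurable_const.indicator hS),
        ⟨1, fun x => ?_⟩, ?_⟩
      · by_cases hx : x ∈ S <;> simp [Set.indicator, hx]
      · have hC : ∀ x, |S.indicator (fun _ => (1 : ℝ)) x| ≤ 1 := by
          intro x; by_cases hx : x ∈ S <;> simp [Set.indicator, hx]
        rw [key2 _ (measurable_const.indicator hS) 1 hC]
        clear_value g
        clear hg_def hg_sm hUm hle key key2 hm m
        have hmemb : ∀ ω, (U ω ∈ S) ↔ ω ∈ A := by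
          intro ω; constructor
          · intro h; rw [← hSA]; exact h
          · intro h; rw [← hSA] at h; exact h
        have hrw : ∫ ω, (S.indicator (fun _ => (1 : ℝ)) (U ω) * (U ω - g ω)
            - |S.indicator (fun _ => (1 : ℝ)) (U ω)| * c₀) ∂P
            = ∫ ω, A.indicator (fun ω => U ω - g ω - c₀) ω ∂P := by
          refine integral_congr_ae (Filter.Eventually.of_forall fun ω => ?_)
          dsimp only
          by_cases hω : ω ∈ A
          · rw [Set.indicator_of_mem ((hmemb ω).mpr hω), Set.indicator_of_mem hω, abs_one]
            ring
          · rw [Set.indicator_of_notMem (fun h => hω ((hmemb ω).mp h)),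
              Set.indicator_of_notMem hω]
            simp
        rw [hrw, integral_indicator hA_meas]
        have hφ_int : IntegrableOn (fun ω => U ω - g ω - c₀) A P :=
          ((((hbdd_int U hUmeas 1 hU_bd).sub hg_int).sub (integrable_const c₀))).integrableOn
        have hnn : 0 ≤ᵐ[P.restrict A] fun ω => U ω - g ω - c₀ := by
          rw [Filter.EventuallyLE, ae_restrict_iff' hA_meas]
          filter_upwards with ω hω
          have : g ω - U ω < -c₀ := hω
          simp only [Pi.zero_apply]; linarith
        refine (setIntegral_pos_iff_support_of_nonneg_ae hnn hφ_int).mpr ?_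
        · refine lt_of_lt_of_le hneg (measure_mono ?_)
          intro ω hω
          refine ⟨?_, hω⟩
          simp only [Function.mem_support]
          have : g ω - U ω < -c₀ := hω
          intro h; linarith
end

section
/- Multicalibration from soundness: let X, Y, μ, U = μ(X), c₀ be as above, and let S be a measurable set of inputs. If for every bounded measurable b̃ : [0,1] → ℝ the bet b(x) = b̃(μ(x))·1[x ∈ S] satisfies E[b(X)(μ(X) − Y) − |b(X)|·c₀] ≤ 0, then |1[X∈S]·(E[Y | U, X∈S] − U)| ≤ c₀ on every subset of {X ∈ S} of positive probability; i.e., the forecaster is calibrated on S up to error c₀. -/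
open MeasureTheory

/-- Multicalibration from soundness: if every bounded measurable bet of the form
`b(x) = b̃(μf x) · 1[x ∈ S]` has non-positive expected payoff after the `|b| c₀`
discount, then the forecaster is calibrated on `S` up to error `c₀`: on every
band `{μf (X ·) ∈ (u₀, u₁)} ∩ {X ∈ S}` of positive probability, the average of
`Y − U` is bounded in absolute value by `c₀` times the band's probability. -/
theorem stmt_16 {Ω 𝒳 : Type*} [MeasurableSpace Ω] [MeasurableSpace 𝒳]
    (P : Measure Ω) [IsProbabilityMeasure P]
    (X : Ω → 𝒳) (hX : Measurable X)
    (μf : 𝒳 → ℝ) (hμf : Measurable μf) (hμf01 : ∀ x, μf x ∈ Set.Icc (0 : ℝ) 1)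
    (Y : Ω → ℝ) (hY : Measurable Y) (hY01 : ∀ ω, Y ω = 0 ∨ Y ω = 1)
    (c₀ : ℝ) (hc₀ : 0 ≤ c₀)
    (U : Ω → ℝ) (hU : ∀ ω, U ω = μf (X ω))
    (S : Set 𝒳) (hS : MeasurableSet S)
    (hsound : ∀ b : ℝ → ℝ, Measurable b → (∃ C : ℝ, ∀ x, |b x| ≤ C) →
      (∫ ω, ((b (U ω) * Set.indicator S (fun _ => (1 : ℝ)) (X ω)) * (U ω - Y ω)
          - |b (U ω) * Set.indicator S (fun _ => (1 : ℝ)) (X ω)| * c₀) ∂P) ≤ 0) :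
    ∀ u₀ u₁ : ℝ, u₀ < u₁ →
      0 < P {ω | X ω ∈ S ∧ U ω ∈ Set.Ioo u₀ u₁} →
      |∫ ω in {ω | X ω ∈ S ∧ U ω ∈ Set.Ioo u₀ u₁}, (Y ω - U ω) ∂P|
        ≤ c₀ * (P {ω | X ω ∈ S ∧ U ω ∈ Set.Ioo u₀ u₁}).toReal := by

  intro u₀ u₁ hlt hpos
  have hUeq : U = fun ω => μf (X ω) := funext hU
  have hUmeas : Measurable U := by rw [hUeq]; exact hμf.comp hX
  set A : Set Ω := {ω | X ω ∈ S ∧ U ω ∈ Set.Ioo u₀ u₁} with hAdef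
  have hAmeas : MeasurableSet A := (hX hS).inter (hUmeas measurableSet_Ioo)
  -- integrability of U - Y
  have hg : Integrable (fun ω => U ω - Y ω) P := by
    refine (integrable_const (2 : ℝ)).mono' ((hUmeas.sub hY).aestronglyMeasurable) ?_
    filter_upwards with ω
    have h1 := hμf01 (X ω)
    have h2 := hY01 ω
    rw [Real.norm_eq_abs, abs_sub_le_iff]
    rcases h2 with h2 | h2 <;> rw [hU ω, h2] <;> constructor <;> linarith [h1.1, h1.2]
  have hgA : IntegrableOn (fun ω => U ω - Y ω) A P := hg.integrableOn
  have hcA : IntegrableOn (fun _ : Ω => c₀) A P := integrableOn_const (measure_ne_top _ _)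
  -- generic lemma: apply hsound with ±indicator bet
  have main : ∀ s : ℝ, s = 1 ∨ s = -1 →
      (∫ ω in A, s * (U ω - Y ω) ∂P) ≤ c₀ * (P A).toReal := by
    intro s hs
    set b : ℝ → ℝ := fun u => s * Set.indicator (Set.Ioo u₀ u₁) (fun _ => (1 : ℝ)) u with hbdef
    have hbmeas : Measurable b :=
      measurable_const.mul (measurable_const.indicator measurableSet_Ioo)
    have hbbd : ∃ C : ℝ, ∀ x, |b x| ≤ C := by
      refine ⟨1, fun x => ?_⟩
      rw [hbdef]
      simp only [Set.indicator_apply]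
      split_ifs <;> rcases hs with h | h <;> simp [h]
    have hso := hsound b hbmeas hbbd
    have hptw : ∀ ω, (b (U ω) * Set.indicator S (fun _ => (1 : ℝ)) (X ω)) * (U ω - Y ω)
          - |b (U ω) * Set.indicator S (fun _ => (1 : ℝ)) (X ω)| * c₀
        = A.indicator (fun ω => s * (U ω - Y ω) - c₀) ω := by
      intro ω
      have habs : |s| = 1 := by rcases hs with h | h <;> simp [h]
      by_cases h1 : U ω ∈ Set.Ioo u₀ u₁ <;> by_cases h2 : X ω ∈ S <;>
        rw [Set.mem_Ioo] at h1 <;>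
        simp [hbdef, Set.indicator_apply, h1, h2, hAdef, habs, abs_mul,
          Set.mem_setOf_eq, Set.mem_Ioo]
    rw [show (fun ω => (b (U ω) * Set.indicator S (fun _ => (1 : ℝ)) (X ω)) * (U ω - Y ω)
          - |b (U ω) * Set.indicator S (fun _ => (1 : ℝ)) (X ω)| * c₀)
        = fun ω => A.indicator (fun ω => s * (U ω - Y ω) - c₀) ω from funext hptw,
      integral_indicator hAmeas] at hso
    have hsplit : (∫ ω in A, (s * (U ω - Y ω) - c₀) ∂P)
        = (∫ ω in A, s * (U ω - Y ω) ∂P) - ∫ ω in A, (c₀ : ℝ) ∂P := by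
      refine integral_sub ?_ hcA
      have h' : Integrable (fun ω => U ω - Y ω) (P.restrict A) := hgA
      rcases hs with h | h <;> subst h
      · simpa using h'
      · exact h'.neg.congr (Filter.Eventually.of_forall fun ω => by simp)
    rw [hsplit, setIntegral_const, smul_eq_mul, sub_nonpos.symm] at hso
    rw [measureReal_def] at hso
    linarith [hso]
  have hpos' : (∫ ω in A, (1 : ℝ) * (U ω - Y ω) ∂P) ≤ c₀ * (P A).toReal := main 1 (Or.inl rfl)
  have hneg' : (∫ ω in A, (-1 : ℝ) * (U ω - Y ω) ∂P) ≤ c₀ * (P A).toReal := main (-1) (Or.inr rfl)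
  simp only [one_mul, neg_one_mul] at hpos' hneg'
  have heq : (∫ ω in A, (Y ω - U ω) ∂P) = ∫ ω in A, -(U ω - Y ω) ∂P := by
    congr 1; funext ω; ring
  rw [abs_le]
  constructor
  · rw [heq, integral_neg]
    linarith
  · rw [heq, integral_neg]
    have : (∫ ω in A, (U ω - Y ω) ∂P) = -∫ ω in A, -(U ω - Y ω) ∂P := by rw [integral_neg]; ring
    linarith [hneg', this]
end

section
/- Quantitative exactness from swap regret: let b_t ∈ [−M, M], y_t ∈ {0,1}, μ_t, ĉ_t ∈ [0,1], λ_t ∈ ℝ be sequences, and set r_t = (b_t/√|b_t|)(μ_t − y_t) − √|b_t|·ĉ_t, s_t = −√|b_t| (with r_t = s_t = 0 when b_t = 0). If the swap-type regret R = Σ_t (r_t+s_tλ_t)² − inf_{λ∈ℝ} Σ_t (r_t+s_t(λ_t+λ))² satisfies R ≤ C√(T log T), then ((1/T)·Σ_{t=1}^T [b_t(μ_t − y_t) − |b_t|(ĉ_t + λ_t)])² ≤ C·M·√(log T / T). -/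
open Finset

/-- Quantitative exactness from swap regret: with
`r_t = (b_t/√|b_t|)(μ_t − y_t) − √|b_t| ĉ_t` and `s_t = −√|b_t|`, if the
swap-type regret satisfies `R ≤ C √(T log T)`, then the squared average betting
loss of the forecaster with widths `c_t = ĉ_t + λ_t` is at most
`C M √(log T / T)`. -/
theorem stmt_19 (T : ℕ) (hT : 1 ≤ T) (M C : ℝ)
    (b y μ ch lam r s : ℕ → ℝ)
    (hbM : ∀ t < T, |b t| ≤ M)
    (hy : ∀ t < T, y t = 0 ∨ y t = 1)
    (hμ : ∀ t < T, μ t ∈ Set.Icc (0 : ℝ) 1)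
    (hch : ∀ t < T, ch t ∈ Set.Icc (0 : ℝ) 1)
    (hr : ∀ t, r t = (b t / Real.sqrt |b t|) * (μ t - y t) - Real.sqrt |b t| * ch t)
    (hs : ∀ t, s t = -Real.sqrt |b t|)
    (hR : (∑ t ∈ Finset.range T, (r t + s t * lam t) ^ 2)
          - sInf (Set.range fun l : ℝ =>
              ∑ t ∈ Finset.range T, (r t + s t * (lam t + l)) ^ 2)
        ≤ C * Real.sqrt (T * Real.log T)) :
    ((1 / (T : ℝ)) * ∑ t ∈ Finset.range T,
        (b t * (μ t - y t) - |b t| * (ch t + lam t))) ^ 2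
      ≤ C * M * Real.sqrt (Real.log T / T) := by
  have hTpos : (0:ℝ) < T := by exact_mod_cast hT
  set A := ∑ t ∈ Finset.range T, (r t + s t * lam t) ^ 2 with hA
  set P := ∑ t ∈ Finset.range T, (r t + s t * lam t) * s t with hP
  set Q := ∑ t ∈ Finset.range T, (s t) ^ 2 with hQ
  set I := sInf (Set.range fun l : ℝ =>
      ∑ t ∈ Finset.range T, (r t + s t * (lam t + l)) ^ 2) with hI
  have hsq : ∀ t, s t ^ 2 = |b t| := by
    intro t
    rw [hs, neg_pow]
    simp [Real.sq_sqrt (abs_nonneg (b t))]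
  have hf : ∀ l : ℝ, ∑ t ∈ Finset.range T, (r t + s t * (lam t + l)) ^ 2
      = A + 2 * l * P + l ^ 2 * Q := by
    intro l
    rw [hA, hP, hQ, Finset.mul_sum, Finset.mul_sum, ← Finset.sum_add_distrib,
      ← Finset.sum_add_distrib]
    exact Finset.sum_congr rfl fun t _ => by ring
  have hbdd : BddBelow (Set.range fun l : ℝ =>
      ∑ t ∈ Finset.range T, (r t + s t * (lam t + l)) ^ 2) := by
    refine ⟨0, ?_⟩
    rintro x ⟨l, rfl⟩
    exact Finset.sum_nonneg fun t _ => sq_nonneg _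
  have hIle : ∀ l : ℝ, I ≤ A + 2 * l * P + l ^ 2 * Q := by
    intro l
    rw [← hf l]
    exact csInf_le hbdd ⟨l, rfl⟩
  have hIA : I ≤ A := by
    have := hIle 0
    simpa using this
  have hQnn : 0 ≤ Q := Finset.sum_nonneg fun t _ => sq_nonneg _
  have hPQ : P ^ 2 ≤ (A - I) * Q := by
    rcases eq_or_lt_of_le hQnn with hQ0 | hQpos
    · have hs0 : ∀ t ∈ Finset.range T, s t ^ 2 = 0 := by
        intro t ht
        have := (Finset.sum_eq_zero_iff_of_nonneg (fun t _ => sq_nonneg (s t))).1 hQ0.symm t ht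
        exact this
      have hP0 : P = 0 := by
        rw [hP]
        apply Finset.sum_eq_zero
        intro t ht
        have : s t = 0 := by
          have := hs0 t ht
          exact pow_eq_zero_iff (by norm_num) |>.1 this
        simp [this]
      rw [hP0, ← hQ0]
      norm_num
    · have h := hIle (-(P / Q))
      have hval : A + 2 * (-(P / Q)) * P + (-(P / Q)) ^ 2 * Q = A - P ^ 2 / Q := by
        field_simp
        ring
      rw [hval] at h
      have : P ^ 2 / Q ≤ A - I := by linarith
      calc P ^ 2 = P ^ 2 / Q * Q := by field_simp
        _ ≤ (A - I) * Q := mul_le_mul_of_nonneg_right this hQnn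
  set K := C * Real.sqrt (T * Real.log T) with hK
  have hAIK : A - I ≤ K := hR
  have hKnn : 0 ≤ K := le_trans (by linarith) hAIK
  have hMnn : 0 ≤ M := le_trans (abs_nonneg (b 0)) (hbM 0 hT)
  have hQM : Q ≤ M * T := by
    have : Q ≤ ∑ _t ∈ Finset.range T, M := by
      apply Finset.sum_le_sum
      intro t ht
      rw [hsq t]
      exact hbM t (Finset.mem_range.1 ht)
    simpa [mul_comm] using this
  -- sum identity
  have hSP : (∑ t ∈ Finset.range T,
      (b t * (μ t - y t) - |b t| * (ch t + lam t))) = -P := by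
    rw [hP, ← Finset.sum_neg_distrib]
    apply Finset.sum_congr rfl
    intro t _
    rw [hr t, hs t]
    by_cases hb : b t = 0
    · simp [hb]
    · have hu : Real.sqrt |b t| ≠ 0 := by
        simp [Real.sqrt_eq_zero', abs_nonneg, abs_pos, hb, not_le.2 (abs_pos.2 hb)]
      have husq : Real.sqrt |b t| * Real.sqrt |b t| = |b t| :=
        Real.mul_self_sqrt (abs_nonneg _)
      have hdiv : b t / Real.sqrt |b t| * Real.sqrt |b t| = b t :=
        div_mul_cancel₀ _ hu
      linear_combination -(μ t - y t) * hdiv + (ch t + lam t) * husq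
  -- combine
  have hS2 : (∑ t ∈ Finset.range T,
      (b t * (μ t - y t) - |b t| * (ch t + lam t))) ^ 2 ≤ K * (M * T) := by
    rw [hSP, neg_sq]
    calc P ^ 2 ≤ (A - I) * Q := hPQ
      _ ≤ K * Q := mul_le_mul_of_nonneg_right hAIK hQnn
      _ ≤ K * (M * T) := mul_le_mul_of_nonneg_left hQM hKnn
  -- identity between sqrt forms
  have hlog : 0 ≤ Real.log T := Real.log_nonneg (by exact_mod_cast hT)
  have hsqrtT : Real.sqrt T * Real.sqrt T = (T : ℝ) := Real.mul_self_sqrt (le_of_lt hTpos)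
  have hsqrtTne : Real.sqrt T ≠ 0 := by positivity
  have hid : Real.sqrt (T * Real.log T) / T = Real.sqrt (Real.log T / T) := by
    rw [Real.sqrt_mul hTpos.le, Real.sqrt_div hlog]
    rw [div_eq_div_iff hTpos.ne' hsqrtTne]
    linear_combination Real.sqrt (Real.log T) * hsqrtT
  have hRHS : C * M * Real.sqrt (Real.log T / T) = K * M / T := by
    rw [hK, ← hid]; ring
  rw [hRHS]
  have heq : ((1 / (T:ℝ)) * ∑ t ∈ Finset.range T,
      (b t * (μ t - y t) - |b t| * (ch t + lam t))) ^ 2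
      = (∑ t ∈ Finset.range T,
      (b t * (μ t - y t) - |b t| * (ch t + lam t))) ^ 2 / T ^ 2 := by
    rw [mul_pow]; ring
  rw [heq, div_le_div_iff₀ (by positivity) hTpos]
  nlinarith [hS2, hTpos, mul_le_mul_of_nonneg_right hS2 hTpos.le]
end
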